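/- arXiv:1106.5767 — 2 statements merged into one kernel-verified Lean document; each statement's English description precedes it below -/
import Mathlib

section
/- Every binary abelian square y ∈ {0,1}* can be written as an element of x ∐ x^R for some word x; specifically, if the first half of y contains j 0's out of n letters, then y ∈ (0^j 1^{n-j}) ∐ (0^j 1^{n-j})^R. -/
/-!
A binary word `w` with `j` zeros is an interleaving of its zeros `0^j` with its ones
`1^(|w| - j)`. Applied to `u` this gives `u ∈ 0^j ∐ 1^(n-j)`, and applied to `v`, which has the
same length and number of zeros, `v ∈ 1^(n-j) ∐ 0^j`. Shuffles concatenate componentwise, so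
`u v ∈ 0^j 1^(n-j) ∐ 1^(n-j) 0^j = x ∐ x^R`.
-/

/-- `IsShuffle x y z` means `z` is an interleaving of `x` and `y`, preserving
the relative order of the letters of each; i.e. `z ∈ x ∐ y` (ordinary shuffle). -/
inductive IsShuffle {α : Type*} : List α → List α → List α → Prop
  | nil : IsShuffle [] [] []
  | left {x y z : List α} (a : α) : IsShuffle x y z → IsShuffle (a :: x) y (a :: z)
  | right {x y z : List α} (a : α) : IsShuffle x y z → IsShuffle x (a :: y) (a :: z)

namespace IsShuffle

variable {α : Type*} {x y z x' y' z' : List α}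

theorem symm (h : IsShuffle x y z) : IsShuffle y x z := by
  induction h with
  | nil => exact nil
  | left a _ ih => exact ih.right a
  | right a _ ih => exact ih.left a

theorem append (h : IsShuffle x y z) (h' : IsShuffle x' y' z') :
    IsShuffle (x ++ x') (y ++ y') (z ++ z') := by
  induction h with
  | nil => exact h'
  | left a _ ih => exact ih.left a
  | right a _ ih => exact ih.right a

end IsShuffle

theorem isShuffle_filter_filter_not {α : Type*} (p : α → Bool) (w : List α) :
    IsShuffle (w.filter p) (w.filter fun a => !p a) w := by
  induction w with
  | nil => exact .nil
  | cons a w ih =>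
    cases hp : p a
    · simpa [List.filter_cons, hp] using ih.right a
    · simpa [List.filter_cons, hp] using ih.left a

theorem isShuffle_replicate_zero_replicate_one (w : List (Fin 2)) :
    IsShuffle (List.replicate (w.count 0) 0) (List.replicate (w.length - w.count 0) 1) w := by
  have hzeros : w.filter (· == 0) = List.replicate (w.count 0) 0 := List.filter_beq 0
  have hones : (w.filter fun a => !(a == 0)) = List.replicate (w.length - w.count 0) 1 := by
    refine List.eq_replicate_iff.mpr ⟨?_, fun b hb => ?_⟩
    · rw [← List.countP_eq_length_filter, List.length_eq_countP_add_countP (· == 0),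
        List.count_eq_countP]
      simp only [Nat.add_sub_cancel_left, decide_not, Bool.decide_eq_true]
    · have : b ≠ 0 := by simpa using (List.mem_filter.mp hb).2
      omega
  simpa only [hzeros, hones] using isShuffle_filter_filter_not (· == (0 : Fin 2)) w

/-- Every binary abelian square y = u ++ v (|u| = |v|, equally many 0's) is an
interleaving of x = 0^j 1^(n-j) with its reverse, where n = |u| and j is the
number of 0's in u. -/
theorem binary_abelianSquare_shuffle_reverse (u v : List (Fin 2))
    (hlen : u.length = v.length) (hcount : u.count 0 = v.count 0) :
    ∃ x : List (Fin 2), x = List.replicate (u.count 0) 0 ++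
        List.replicate (u.length - u.count 0) 1 ∧
      IsShuffle x x.reverse (u ++ v) := by
  have hu := isShuffle_replicate_zero_replicate_one u
  have hv := (isShuffle_replicate_zero_replicate_one v).symm
  rw [← hlen, ← hcount] at hv
  refine ⟨_, rfl, ?_⟩
  simpa only [List.reverse_append, List.reverse_replicate] using hu.append hv
end

section
/- The ternary word 012012 is an abelian square but cannot be written as an element of w ∐ w^R for any word w over {0,1,2}. -/
/-! The letters of `w` are those of `012` (half of the letters of `012012`, by counting), so `w`
is one of the six permutations of `012`; none of these works, as one sees by reading
`012012` letter by letter. -/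

namespace IsShuffle

variable {α : Type*} {x y z : List α}

theorem perm (h : IsShuffle x y z) : z.Perm (x ++ y) := by
  induction h with
  | nil => rfl
  | left a _ ih => exact ih.cons a
  | right a _ ih => exact (ih.cons a).trans List.perm_middle.symm

theorem count_eq_two_mul_count [BEq α] [LawfulBEq α] {w : List α}
    (h : IsShuffle w w.reverse z) (a : α) : z.count a = 2 * w.count a := by
  rw [h.perm.count_eq, List.count_append, List.count_reverse, two_mul]

theorem perm_of_count_eq_two_mul [DecidableEq α] {w u : List α}
    (h : IsShuffle w w.reverse z) (hz : ∀ a, z.count a = 2 * u.count a) : w.Perm u :=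
  List.perm_iff_count.2 fun a => by
    have := h.count_eq_two_mul_count a
    rw [hz] at this
    omega

end IsShuffle

theorem isShuffle_nil_iff {α : Type*} {x y : List α} :
    IsShuffle x y [] ↔ x = [] ∧ y = [] := by
  constructor
  · rintro ⟨⟩
    exact ⟨rfl, rfl⟩
  · rintro ⟨rfl, rfl⟩
    exact .nil

theorem isShuffle_cons_iff {α : Type*} {x y z : List α} {c : α} :
    IsShuffle x y (c :: z) ↔
      (∃ x', x = c :: x' ∧ IsShuffle x' y z) ∨ (∃ y', y = c :: y' ∧ IsShuffle x y' z) := by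
  constructor
  · rintro (_ | ⟨_, h⟩ | ⟨_, h⟩)
    · exact .inl ⟨_, rfl, h⟩
    · exact .inr ⟨_, rfl, h⟩
  · rintro (⟨x', rfl, h⟩ | ⟨y', rfl, h⟩)
    · exact h.left c
    · exact h.right c

/-- The ternary word 012012 is an abelian square, yet it is not an interleaving
of any word with its reverse. -/
theorem word_012012 :
    (∃ u v : List (Fin 3), ([0, 1, 2, 0, 1, 2] : List (Fin 3)) = u ++ v ∧
        u.length = v.length ∧ u.Perm v) ∧
    ¬ ∃ w : List (Fin 3), IsShuffle w w.reverse [0, 1, 2, 0, 1, 2] := by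
  refine ⟨⟨[0, 1, 2], [0, 1, 2], rfl, rfl, .refl _⟩, ?_⟩
  rintro ⟨w, h⟩
  have hw : w ∈ ([0, 1, 2] : List (Fin 3)).permutations' :=
    List.mem_permutations'.2 <| h.perm_of_count_eq_two_mul fun a => by
      fin_cases a <;> rfl
  have hperms : ([0, 1, 2] : List (Fin 3)).permutations' =
      [[0, 1, 2], [1, 0, 2], [1, 2, 0], [0, 2, 1], [2, 0, 1], [2, 1, 0]] := rfl
  rw [hperms] at hw
  simp only [List.mem_cons, List.not_mem_nil, or_false] at hw
  rcases hw with rfl | rfl | rfl | rfl | rfl | rfl <;>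
    simp [isShuffle_cons_iff, isShuffle_nil_iff] at h
end
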